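/- Let b : ℝ^d → ℝ^d be Lipschitz continuous, let λ ≥ 0, let x : [0,∞) → ℝ^d be continuous, let ϖ > 0 and let ρ₀ ∈ ℝ^d. Then the ordinary differential equation ρ'(t) = b(x(t) + ρ(t)) − b(x(t)) − ϖ g(ρ(t)) − λ ρ(t), with initial condition ρ(0) = ρ₀, admits exactly one differentiable solution ρ : [0,∞) → ℝ^d. -/

import Mathlib

/-!
Replace `g` by the Lipschitz maps `gReg δ`, which agree with `g` where `‖ρ‖ ≥ δ²` and stay
within `2δ` of it everywhere; the regularized equations have global solutions by
Picard–Lindelöf. Because `g` is monotone and `b` is Lipschitz, the difference `w` of solutions of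
two equations whose `g`-terms are within `e₁`, `e₂` of `g` satisfies
`⟪w', w⟫ ≤ L ‖w‖² + ϖ (e₁ + e₂) ‖w‖`, and Grönwall gives `‖w t‖ ≤ ϖ (e₁ + e₂) e^{(L+1) t}`.
Hence the regularized solutions converge locally uniformly, the limit solves the equation
(pass to the limit in its integral form), and the case `e₁ = e₂ = 0` is uniqueness.
-/

open Set

/-- The map `g(ρ) = |ρ|^{-1/2} ρ` for `ρ ≠ 0`, `g(0) = 0` (note `0 ^ (-(1/2)) = 0`
for the real power function). -/
noncomputable def gMap (d : ℕ) (ρ : EuclideanSpace ℝ (Fin d)) : EuclideanSpace ℝ (Fin d) :=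
  (‖ρ‖ ^ (-(1/2) : ℝ)) • ρ

open Filter Topology MeasureTheory
open scoped NNReal

section gMap

variable {d : ℕ}

theorem gMap_eq_inv_sqrt_smul (ρ : EuclideanSpace ℝ (Fin d)) : gMap d ρ = (√‖ρ‖)⁻¹ • ρ := by
  rw [gMap, Real.rpow_neg (norm_nonneg ρ), ← Real.sqrt_eq_rpow]

theorem norm_gMap (ρ : EuclideanSpace ℝ (Fin d)) : ‖gMap d ρ‖ = √‖ρ‖ := by
  rw [gMap_eq_inv_sqrt_smul, norm_smul, norm_inv, Real.norm_of_nonneg (Real.sqrt_nonneg _),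
    ← div_eq_inv_mul, Real.div_sqrt]

theorem inner_gMap_self (ρ : EuclideanSpace ℝ (Fin d)) :
    inner ℝ (gMap d ρ) ρ = √‖ρ‖ * ‖ρ‖ := by
  rw [gMap_eq_inv_sqrt_smul, real_inner_smul_left, real_inner_self_eq_norm_mul_norm,
    ← mul_assoc, ← div_eq_inv_mul, Real.div_sqrt]

theorem inner_gMap_sub_gMap_nonneg (a b : EuclideanSpace ℝ (Fin d)) :
    0 ≤ inner ℝ (gMap d a - gMap d b) (a - b) := by
  have hab : inner ℝ (gMap d a) b ≤ √‖a‖ * ‖b‖ := by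
    simpa only [norm_gMap] using real_inner_le_norm (gMap d a) b
  have hba : inner ℝ (gMap d b) a ≤ √‖b‖ * ‖a‖ := by
    simpa only [norm_gMap] using real_inner_le_norm (gMap d b) a
  have hsq : (√‖a‖ - √‖b‖) * (‖a‖ - ‖b‖) = (√‖a‖ - √‖b‖) ^ 2 * (√‖a‖ + √‖b‖) := by
    nth_rw 2 [← Real.sq_sqrt (norm_nonneg a), ← Real.sq_sqrt (norm_nonneg b)]
    ring
  have hprod : 0 ≤ (√‖a‖ - √‖b‖) * (‖a‖ - ‖b‖) := by rw [hsq]; positivity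
  simp only [inner_sub_left, inner_sub_right, inner_gMap_self]
  linarith

end gMap

/-- A Lipschitz regularization of `gMap`: the factor `‖ρ‖ ^ (-1/2)` is capped at `δ⁻¹`. -/
noncomputable def gReg {V : Type*} [NormedAddCommGroup V] [NormedSpace ℝ V] (δ : ℝ) (ρ : V) : V :=
  (√(max ‖ρ‖ (δ ^ 2)))⁻¹ • ρ

section gReg

variable {V : Type*} [NormedAddCommGroup V] [NormedSpace ℝ V]

theorem norm_gReg_le (δ : ℝ) (ρ : V) : ‖gReg δ ρ‖ ≤ √‖ρ‖ := by
  rw [gReg, norm_smul, norm_inv, Real.norm_of_nonneg (Real.sqrt_nonneg _)]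
  refine inv_mul_le_of_le_mul₀ (Real.sqrt_nonneg _) (Real.sqrt_nonneg _) ?_
  calc ‖ρ‖ = √‖ρ‖ * √‖ρ‖ := (Real.mul_self_sqrt (norm_nonneg ρ)).symm
    _ ≤ √(max ‖ρ‖ (δ ^ 2)) * √‖ρ‖ := by gcongr; exact le_max_left _ _

theorem lipschitzWith_gReg {δ : ℝ} (hδ : 0 < δ) :
    LipschitzWith (2 / δ).toNNReal (gReg (V := V) δ) := by
  refine LipschitzWith.of_dist_le_mul fun a b => ?_
  rw [Real.coe_toNNReal _ (by positivity), dist_eq_norm, dist_eq_norm]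
  set s : V → ℝ := fun ρ => √(max ‖ρ‖ (δ ^ 2))
  have hδs : ∀ ρ, δ ≤ s ρ := fun ρ =>
    (Real.le_sqrt hδ.le (by positivity)).2 (le_max_right _ _)
  have hs0 : ∀ ρ, 0 < s ρ := fun ρ => hδ.trans_le (hδs ρ)
  have hs_sq : ∀ ρ, s ρ ^ 2 = max ‖ρ‖ (δ ^ 2) := fun ρ => Real.sq_sqrt (by positivity)
  have hnorm : ‖b‖ ≤ s b ^ 2 := (hs_sq b).symm ▸ le_max_left _ _
  have hdiff : |s a - s b| * (s a + s b) ≤ ‖a - b‖ := by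
    rw [← abs_of_pos (add_pos (hs0 a) (hs0 b)), ← abs_mul,
      show (s a - s b) * (s a + s b) = s a ^ 2 - s b ^ 2 by ring, hs_sq, hs_sq]
    exact (abs_max_sub_max_le_abs _ _ _).trans (abs_norm_sub_norm_le a b)
  have hsplit : gReg δ a - gReg δ b = (s a)⁻¹ • (a - b) + ((s a)⁻¹ - (s b)⁻¹) • b := by
    simp only [gReg, s, smul_sub, sub_smul]; abel
  have hfirst : ‖(s a)⁻¹ • (a - b)‖ ≤ δ⁻¹ * ‖a - b‖ := by
    rw [norm_smul, Real.norm_of_nonneg (inv_nonneg.2 (hs0 a).le)]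
    gcongr
    exact hδs a
  have hsecond : ‖((s a)⁻¹ - (s b)⁻¹) • b‖ ≤ δ⁻¹ * ‖a - b‖ := by
    have hsa := hs0 a; have hsb := hs0 b
    rw [norm_smul, Real.norm_eq_abs, inv_sub_inv hsa.ne' hsb.ne', abs_div,
      abs_of_pos (mul_pos hsa hsb), abs_sub_comm, div_mul_eq_mul_div,
      div_le_iff₀ (mul_pos hsa hsb)]
    calc |s a - s b| * ‖b‖ ≤ |s a - s b| * (s b * (s a + s b)) := by
          gcongr; nlinarith
      _ = |s a - s b| * (s a + s b) * s b := by ring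
      _ ≤ ‖a - b‖ * s b := by gcongr
      _ ≤ ‖a - b‖ * s b * (δ⁻¹ * s a) := by
          refine le_mul_of_one_le_right (by positivity) ?_
          rw [inv_mul_eq_div, one_le_div hδ]
          exact hδs a
      _ = δ⁻¹ * ‖a - b‖ * (s a * s b) := by ring
  calc ‖gReg δ a - gReg δ b‖ ≤ δ⁻¹ * ‖a - b‖ + δ⁻¹ * ‖a - b‖ :=
        hsplit ▸ (norm_add_le _ _).trans (add_le_add hfirst hsecond)
    _ = 2 / δ * ‖a - b‖ := by ring

end gReg

section

variable {d : ℕ}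

theorem gReg_eq_gMap {δ : ℝ} {ρ : EuclideanSpace ℝ (Fin d)} (h : δ ^ 2 ≤ ‖ρ‖) :
    gReg δ ρ = gMap d ρ := by
  rw [gReg, max_eq_left h, gMap_eq_inv_sqrt_smul]

theorem norm_gReg_sub_gMap_le {δ : ℝ} (hδ : 0 ≤ δ) (ρ : EuclideanSpace ℝ (Fin d)) :
    ‖gReg δ ρ - gMap d ρ‖ ≤ 2 * δ := by
  rcases le_total (δ ^ 2) ‖ρ‖ with h | h
  · rw [gReg_eq_gMap h, sub_self, norm_zero]
    positivity
  · have hρ : √‖ρ‖ ≤ δ := (Real.sqrt_le_left hδ).2 h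
    calc ‖gReg δ ρ - gMap d ρ‖ ≤ ‖gReg δ ρ‖ + ‖gMap d ρ‖ := norm_sub_le _ _
      _ ≤ δ + δ := add_le_add ((norm_gReg_le δ ρ).trans hρ) ((norm_gMap ρ).trans_le hρ)
      _ = 2 * δ := by ring

theorem tendstoUniformly_gReg {ι : Type*} {l : Filter ι} {δ : ι → ℝ} (hδ₀ : ∀ i, 0 ≤ δ i)
    (hδ : Tendsto δ l (𝓝 0)) : TendstoUniformly (fun i => gReg (δ i)) (gMap d) l := by
  rw [Metric.tendstoUniformly_iff]
  intro ε hε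
  filter_upwards [hδ.eventually (gt_mem_nhds (half_pos hε))] with i hi ρ
  rw [dist_comm, dist_eq_norm]
  linarith [norm_gReg_sub_gMap_le (hδ₀ i) ρ]

theorem continuous_gMap : Continuous (gMap d) :=
  (tendstoUniformly_gReg (fun n : ℕ => by positivity)
    tendsto_one_div_add_atTop_nhds_zero_nat).continuous
    (Frequently.of_forall fun _ => (lipschitzWith_gReg (by positivity)).continuous)

end

section Comparison

variable {H : Type*} [NormedAddCommGroup H] [InnerProductSpace ℝ H]

theorem dist_le_of_trajectories_of_inner_le {v₁ v₂ : ℝ → H → H} {f₁ f₂ : ℝ → H} {K δ a b : ℝ}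
    (hK : 0 ≤ K) (hδ : 0 ≤ δ)
    (hv : ∀ t ∈ Ico a b, ∀ y₁ y₂,
      inner ℝ (v₁ t y₁ - v₂ t y₂) (y₁ - y₂) ≤ K * ‖y₁ - y₂‖ ^ 2 + δ * ‖y₁ - y₂‖)
    (hf₁ : ContinuousOn f₁ (Icc a b))
    (hf₁' : ∀ t ∈ Ico a b, HasDerivWithinAt f₁ (v₁ t (f₁ t)) (Ici t) t)
    (hf₂ : ContinuousOn f₂ (Icc a b))
    (hf₂' : ∀ t ∈ Ico a b, HasDerivWithinAt f₂ (v₂ t (f₂ t)) (Ici t) t)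
    (ha : f₁ a = f₂ a) :
    ∀ t ∈ Icc a b, dist (f₁ t) (f₂ t) ≤ δ * Real.exp ((K + 1) * (t - a)) := by
  have hsq : ∀ t ∈ Icc a b,
      ‖f₁ t - f₂ t‖ ^ 2 ≤ gronwallBound 0 (2 * K + 1) (δ ^ 2) (t - a) := by
    refine le_gronwallBound_of_liminf_deriv_right_le ((hf₁.sub hf₂).norm.pow 2)
      (fun t ht r hr => ((hf₁' t ht).sub (hf₂' t ht)).norm_sq.liminf_right_slope_le hr)
      (by simp [ha]) fun t ht => ?_
    have := hv t ht (f₁ t) (f₂ t)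
    rw [real_inner_comm] at this
    simp only [Pi.sub_apply]
    nlinarith [sq_nonneg (‖f₁ t - f₂ t‖ - δ)]
  intro t ht
  have hta : 0 ≤ t - a := sub_nonneg.2 ht.1
  have hk : 0 < 2 * K + 1 := by positivity
  have hexp : Real.exp ((2 * K + 1) * (t - a)) ≤ Real.exp ((K + 1) * (t - a)) ^ 2 := by
    rw [← Real.exp_nat_mul, Real.exp_le_exp]
    push_cast
    nlinarith
  have hgr : gronwallBound 0 (2 * K + 1) (δ ^ 2) (t - a) ≤
      δ ^ 2 * Real.exp ((2 * K + 1) * (t - a)) := by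
    simp only [gronwallBound_of_K_ne_0 hk.ne', zero_mul, zero_add]
    rw [div_mul_eq_mul_div, div_le_iff₀ hk]
    have hk1 : 1 ≤ 2 * K + 1 := by linarith
    have he : 0 ≤ δ ^ 2 * Real.exp ((2 * K + 1) * (t - a)) := by positivity
    nlinarith [mul_le_mul_of_nonneg_left hk1 he]
  rw [dist_eq_norm, ← pow_le_pow_iff_left₀ (norm_nonneg _) (by positivity) two_ne_zero, mul_pow]
  calc ‖f₁ t - f₂ t‖ ^ 2 ≤ δ ^ 2 * Real.exp ((2 * K + 1) * (t - a)) := (hsq t ht).trans hgr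
    _ ≤ δ ^ 2 * Real.exp ((K + 1) * (t - a)) ^ 2 := by gcongr

end Comparison

theorem Icc_mem_nhdsWithin_Ici_of_lt {a t T : ℝ} (h : t < T) : Icc a T ∈ 𝓝[Ici a] t := by
  rw [← Ici_inter_Iic]
  exact inter_mem_nhdsWithin _ (Iic_mem_nhds h)

section GlobalExistence

variable {H : Type*} [NormedAddCommGroup H] [NormedSpace ℝ H] {v : ℝ → H → H} {K : ℝ≥0}

/-- Picard–Lindelöf for a globally Lipschitz field: the time of existence `(1 + K)⁻¹` does not
depend on the initial value. -/
theorem exists_hasDerivWithinAt_Icc_of_lipschitzWith [CompleteSpace H]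
    (hv : ∀ t, LipschitzWith K (v t)) {t₀ : ℝ}
    (hcont : ∀ y, ContinuousOn (fun t => v t y) (Icc t₀ (t₀ + (1 + (K : ℝ))⁻¹))) (y₀ : H) :
    ∃ f : ℝ → H, f t₀ = y₀ ∧ ∀ t ∈ Icc t₀ (t₀ + (1 + (K : ℝ))⁻¹),
      HasDerivWithinAt f (v t (f t)) (Icc t₀ (t₀ + (1 + (K : ℝ))⁻¹)) t := by
  have hτ : (0 : ℝ) ≤ (1 + (K : ℝ))⁻¹ := by positivity
  obtain ⟨C, hC⟩ := isCompact_Icc.exists_bound_of_continuousOn (hcont y₀)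
  set R : ℝ≥0 := C.toNNReal
  have hpl : IsPicardLindelof v (tmin := t₀) (tmax := t₀ + (1 + (K : ℝ))⁻¹)
      ⟨t₀, le_rfl, le_add_of_nonneg_right hτ⟩ y₀ R 0 (R * (1 + K)) K :=
    { lipschitzOnWith := fun t _ => (hv t).lipschitzOnWith
      continuousOn := fun y _ => hcont y
      norm_le := fun t ht y hy => by
        have hy₀ : ‖v t y - v t y₀‖ ≤ K * R := by
          rw [← dist_eq_norm]
          exact (hv t).dist_le_mul y y₀ |>.trans (by gcongr; exact Metric.mem_closedBall.1 hy)
        calc ‖v t y‖ ≤ ‖v t y₀‖ + ‖v t y - v t y₀‖ := norm_le_insert' _ _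
          _ ≤ R + K * R := add_le_add ((hC t ht).trans (Real.le_coe_toNNReal C)) hy₀
          _ = (R * (1 + K) : ℝ≥0) := by push_cast; ring
      mul_max_le := by
        rw [add_sub_cancel_left, sub_self, max_eq_left hτ]
        push_cast
        rw [mul_inv_cancel_right₀ (by positivity), sub_zero] }
  exact hpl.exists_eq_forall_mem_Icc_hasDerivWithinAt₀

theorem exists_hasDerivWithinAt_Icc_glue {f g : ℝ → H} {a b c : ℝ} (hab : a ≤ b) (hbc : b ≤ c)
    (hf : ∀ t ∈ Icc a b, HasDerivWithinAt f (v t (f t)) (Icc a b) t)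
    (hg : ∀ t ∈ Icc b c, HasDerivWithinAt g (v t (g t)) (Icc b c) t) (hfg : f b = g b) :
    ∃ h : ℝ → H, h a = f a ∧ ∀ t ∈ Icc a c, HasDerivWithinAt h (v t (h t)) (Icc a c) t := by
  set h : ℝ → H := fun s => if s ≤ b then f s else g s
  have hhf : EqOn h f (Icc a b) := fun s hs => if_pos hs.2
  have hhg : EqOn h g (Icc b c) := fun s hs => by
    rcases hs.1.eq_or_lt with rfl | hlt
    · exact (if_pos le_rfl).trans hfg
    · exact if_neg hlt.not_ge
  refine ⟨h, hhf ⟨le_rfl, hab⟩, fun t ht => ?_⟩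
  rw [← Icc_union_Icc_eq_Icc hab hbc]
  refine HasDerivWithinAt.union ?_ ?_
  · by_cases htab : t ∈ Icc a b
    · rw [hhf htab]; exact (hf t htab).congr_of_mem hhf htab
    · exact HasFDerivWithinAt.of_notMem_closure (by rwa [closure_Icc])
  · by_cases htbc : t ∈ Icc b c
    · rw [hhg htbc]; exact (hg t htbc).congr_of_mem hhg htbc
    · exact HasFDerivWithinAt.of_notMem_closure (by rwa [closure_Icc])

theorem exists_hasDerivWithinAt_Icc_nat_mul_of_lipschitzWith [CompleteSpace H]
    (hv : ∀ t, LipschitzWith K (v t)) {a : ℝ}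
    (hcont : ∀ y, ContinuousOn (fun t => v t y) (Ici a)) (y₀ : H) (n : ℕ) :
    ∃ f : ℝ → H, f a = y₀ ∧ ∀ t ∈ Icc a (a + n * (1 + (K : ℝ))⁻¹),
      HasDerivWithinAt f (v t (f t)) (Icc a (a + n * (1 + (K : ℝ))⁻¹)) t := by
  induction n with
  | zero =>
    refine ⟨fun _ => y₀, rfl, fun t _ => ?_⟩
    rw [Nat.cast_zero, zero_mul, add_zero, Icc_self]
    exact HasFDerivWithinAt.singleton
  | succ n ih =>
    obtain ⟨f, hf₀, hf⟩ := ih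
    set b := a + n * (1 + (K : ℝ))⁻¹
    have hab : a ≤ b := le_add_of_nonneg_right (by positivity)
    obtain ⟨g, hg₀, hg⟩ := exists_hasDerivWithinAt_Icc_of_lipschitzWith hv
      (fun y => (hcont y).mono fun s hs => hab.trans hs.1) (f b)
    obtain ⟨h, hh₀, hh⟩ := exists_hasDerivWithinAt_Icc_glue hab
      (le_add_of_nonneg_right (by positivity)) hf hg hg₀.symm
    refine ⟨h, hh₀.trans hf₀, ?_⟩
    rwa [Nat.cast_succ, add_one_mul, ← add_assoc]

theorem exists_forall_hasDerivWithinAt_Ici_of_lipschitzWith [CompleteSpace H]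
    (hv : ∀ t, LipschitzWith K (v t)) {a : ℝ}
    (hcont : ∀ y, ContinuousOn (fun t => v t y) (Ici a)) (y₀ : H) :
    ∃ f : ℝ → H, f a = y₀ ∧ ∀ t ∈ Ici a, HasDerivWithinAt f (v t (f t)) (Ici a) t := by
  have hIcc : ∀ T, ∃ f : ℝ → H, f a = y₀ ∧
      ∀ t ∈ Icc a T, HasDerivWithinAt f (v t (f t)) (Icc a T) t := by
    intro T
    obtain ⟨n, hn⟩ := exists_nat_ge ((T - a) * (1 + K))
    obtain ⟨f, hf₀, hf⟩ :=
      exists_hasDerivWithinAt_Icc_nat_mul_of_lipschitzWith hv hcont y₀ n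
    have hT : Icc a T ⊆ Icc a (a + n * (1 + (K : ℝ))⁻¹) := by
      refine Icc_subset_Icc_right ?_
      rw [← div_eq_mul_inv, ← sub_le_iff_le_add', le_div_iff₀ (by positivity)]
      exact hn
    exact ⟨f, hf₀, fun t ht => (hf t (hT ht)).mono hT⟩
  choose F hF₀ hF using hIcc
  have hF_Ici : ∀ T, ∀ t ∈ Ico a T, HasDerivWithinAt (F T) (v t (F T t)) (Ici t) t :=
    fun T t ht => (hF T t (Ico_subset_Icc_self ht)).mono_of_mem_nhdsWithin
      (Icc_mem_nhdsGE_of_mem ht)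
  have hF_cont : ∀ T, ContinuousOn (F T) (Icc a T) :=
    fun T t ht => (hF T t ht).continuousWithinAt
  have hagree : ∀ T T', ∀ t ∈ Icc a T, t ∈ Icc a T' → F T t = F T' t := by
    intro T T' t ht ht'
    refine ODE_solution_unique_of_mem_Icc_right (s := fun _ => univ)
      (fun t _ => (hv t).lipschitzOnWith)
      ((hF_cont T).mono (Icc_subset_Icc_right (min_le_left _ _)))
      (fun s hs => hF_Ici T s ⟨hs.1, hs.2.trans_le (min_le_left _ _)⟩) (fun _ _ => trivial)
      ((hF_cont T').mono (Icc_subset_Icc_right (min_le_right _ _)))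
      (fun s hs => hF_Ici T' s ⟨hs.1, hs.2.trans_le (min_le_right _ _)⟩) (fun _ _ => trivial)
      ((hF₀ T).trans (hF₀ T').symm) ⟨ht.1, le_min ht.2 ht'.2⟩
  refine ⟨fun t => F (t + 1) t, hF₀ (a + 1), fun t ht => ?_⟩
  have hnhds : Icc a (t + 1) ∈ 𝓝[Ici a] t := Icc_mem_nhdsWithin_Ici_of_lt (lt_add_one t)
  refine ((hF (t + 1) t ⟨ht, (lt_add_one t).le⟩).mono_of_mem_nhdsWithin hnhds).congr_of_eventuallyEq
    ?_ rfl
  filter_upwards [hnhds] with s hs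
  exact hagree _ _ s ⟨hs.1, (lt_add_one s).le⟩ hs

end GlobalExistence

section LimitOfSolutions

variable {H : Type*} [NormedAddCommGroup H] [NormedSpace ℝ H] [CompleteSpace H]

theorem hasDerivWithinAt_Ici_of_tendsto {f u : ℕ → ℝ → H} {g w : ℝ → H} {a : ℝ}
    (hf : ∀ n, ∀ t ∈ Ici a, HasDerivWithinAt (f n) (u n t) (Ici a) t)
    (hu : ∀ n, ContinuousOn (u n) (Ici a))
    (hbound : ∀ T, ∃ C, ∀ᶠ n in atTop, ∀ t ∈ Icc a T, ‖u n t‖ ≤ C)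
    (hfg : ∀ t ∈ Ici a, Tendsto (fun n => f n t) atTop (𝓝 (g t)))
    (huw : ∀ t ∈ Ici a, Tendsto (fun n => u n t) atTop (𝓝 (w t)))
    (hw : ContinuousOn w (Ici a)) :
    ∀ t ∈ Ici a, HasDerivWithinAt g (w t) (Ici a) t := by
  -- `w` extended to the left of `a` by `w a`, so that the FTC applies on all of `ℝ`
  set w' : ℝ → H := fun s => w (max s a)
  have hw' : Continuous w' :=
    hw.comp_continuous (continuous_id.max continuous_const) fun s => le_max_right s a
  have hint : ∀ t ∈ Ici a, g t = g a + ∫ s in a..t, w' s := by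
    intro t (ht : a ≤ t)
    have hsub : uIoc a t ⊆ Ici a := by
      rw [uIoc_of_le ht]; exact Ioc_subset_Icc_self.trans Icc_subset_Ici_self
    have hft : ∀ n, f n t = f n a + ∫ s in a..t, u n s := by
      intro n
      rw [intervalIntegral.integral_eq_sub_of_hasDeriv_right_of_le ht
        (fun s hs => (hf n s hs.1).continuousWithinAt.mono Icc_subset_Ici_self)
        (fun s hs => ((hf n s hs.1.le).hasDerivAt (Ici_mem_nhds hs.1)).hasDerivWithinAt)
        ((hu n).mono (by rw [uIcc_of_le ht]; exact Icc_subset_Ici_self)).intervalIntegrable]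
      abel
    obtain ⟨C, hC⟩ := hbound t
    have hlim : Tendsto (fun n => ∫ s in a..t, u n s) atTop (𝓝 (∫ s in a..t, w' s)) :=
      intervalIntegral.tendsto_integral_filter_of_dominated_convergence (fun _ => C)
        (Eventually.of_forall fun n => ((hu n).mono hsub).aestronglyMeasurable measurableSet_uIoc)
        (hC.mono fun n hn => ae_of_all _ fun s hs =>
          hn s (Ioc_subset_Icc_self (uIoc_of_le ht ▸ hs)))
        intervalIntegrable_const
        (ae_of_all _ fun s hs => by
          simpa only [w', max_eq_left (mem_Ici.1 (hsub hs))] using huw s (hsub hs))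
    refine tendsto_nhds_unique (hfg t ht) ?_
    simpa only [hft] using (hfg a self_mem_Ici).add hlim
  intro t ht
  have hderiv := ((hw'.integral_hasStrictDerivAt a t).hasDerivAt.hasDerivWithinAt
    (s := Ici a)).const_add (g a)
  rw [show w' t = w t from congrArg w (max_eq_left ht)] at hderiv
  exact hderiv.congr_of_mem hint ht

end LimitOfSolutions

section UniformLimit

variable {α H : Type*} [MetricSpace H]

theorem tendstoUniformlyOn_limUnder_of_dist_le [CompleteSpace H] [Nonempty H] {F : ℕ → α → H}
    {s : Set α} {β : ℕ → ℝ}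
    (hβ : Tendsto β atTop (𝓝 0)) (hF : ∀ n m, ∀ t ∈ s, dist (F n t) (F m t) ≤ β n + β m) :
    TendstoUniformlyOn F (fun t => limUnder atTop fun n => F n t) atTop s := by
  have hlim : ∀ t ∈ s, Tendsto (fun n => F n t) atTop (𝓝 (limUnder atTop fun n => F n t)) := by
    intro t ht
    refine (Metric.cauchySeq_iff'.2 fun ε hε => ?_).tendsto_limUnder
    obtain ⟨N, hN⟩ := eventually_atTop.1 (hβ.eventually (gt_mem_nhds (half_pos hε)))
    exact ⟨N, fun n hn => (hF n N t ht).trans_lt (by linarith [hN n hn, hN N le_rfl])⟩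
  have hdist : ∀ n, ∀ t ∈ s, dist (limUnder atTop fun m => F m t) (F n t) ≤ β n := by
    intro n t ht
    simpa using le_of_tendsto_of_tendsto' ((hlim t ht).dist tendsto_const_nhds)
      (hβ.add_const (β n)) fun m => hF m n t ht
  rw [Metric.tendstoUniformlyOn_iff]
  intro ε hε
  filter_upwards [hβ.eventually (gt_mem_nhds hε)] with n hn t ht
  exact (hdist n t ht).trans_lt hn

theorem continuousOn_Ici_of_tendstoUniformlyOn_Icc {F : ℕ → ℝ → H} {f : ℝ → H} {a : ℝ}
    (hF : ∀ n, ContinuousOn (F n) (Ici a))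
    (h : ∀ T, TendstoUniformlyOn F f atTop (Icc a T)) : ContinuousOn f (Ici a) :=
  (tendstoLocallyUniformlyOn_of_forall_exists_nhds fun t _ =>
    ⟨Icc a (t + 1), Icc_mem_nhdsWithin_Ici_of_lt (lt_add_one t), h (t + 1)⟩).continuousOn
    (Frequently.of_forall hF)

end UniformLimit

noncomputable def odeField {V : Type*} [NormedAddCommGroup V] [NormedSpace ℝ V] (b : V → V)
    (x : ℝ → V) (ϖ lam : ℝ) (G : V → V) (t : ℝ) (ρ : V) : V :=
  b (x t + ρ) - b (x t) - ϖ • G ρ - lam • ρ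

section OdeField

variable {V : Type*} [NormedAddCommGroup V] {b : V → V} {x : ℝ → V} {ϖ lam : ℝ} {L : ℝ≥0}

theorem lipschitzWith_odeField [NormedSpace ℝ V] {G : V → V} {K : ℝ≥0} (hb : LipschitzWith L b)
    (hG : LipschitzWith K G) (t : ℝ) :
    LipschitzWith (L + ‖ϖ‖₊ * K + ‖lam‖₊) (odeField b x ϖ lam G t) := by
  have h := (((hb.comp ((LipschitzWith.const (x t)).add LipschitzWith.id)).sub
    (LipschitzWith.const (b (x t)))).sub ((lipschitzWith_smul ϖ).comp hG)).sub
    (lipschitzWith_smul lam)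
  rwa [mul_add, mul_zero, mul_one, zero_add, add_zero] at h

theorem continuousOn_odeField [NormedSpace ℝ V] {G : V → V} {ρ : ℝ → V} {s : Set ℝ}
    (hb : Continuous b) (hG : Continuous G) (hx : ContinuousOn x s) (hρ : ContinuousOn ρ s) :
    ContinuousOn (fun t => odeField b x ϖ lam G t (ρ t)) s :=
  (((hb.comp_continuousOn (hx.add hρ)).sub (hb.comp_continuousOn hx)).sub
    ((hG.comp_continuousOn hρ).const_smul ϖ)).sub (hρ.const_smul lam)

theorem norm_odeField_le [NormedSpace ℝ V] {G : V → V} (hb : LipschitzWith L b) (hϖ : 0 ≤ ϖ)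
    (hlam : 0 ≤ lam) (t : ℝ) (y : V) :
    ‖odeField b x ϖ lam G t y‖ ≤ L * ‖y‖ + ϖ * ‖G y‖ + lam * ‖y‖ := by
  have hby : ‖b (x t + y) - b (x t)‖ ≤ L * ‖y‖ := by
    simpa [dist_eq_norm] using hb.dist_le_mul (x t + y) (x t)
  calc ‖odeField b x ϖ lam G t y‖
      ≤ ‖b (x t + y) - b (x t)‖ + ‖ϖ • G y‖ + ‖lam • y‖ :=
        (norm_sub_le _ _).trans (add_le_add_left (norm_sub_le _ _) _)
    _ ≤ L * ‖y‖ + ϖ * ‖G y‖ + lam * ‖y‖ := by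
      rw [norm_smul, norm_smul, Real.norm_of_nonneg hϖ, Real.norm_of_nonneg hlam]
      linarith

theorem exists_eventually_norm_odeField_le [NormedSpace ℝ V] {G : ℕ → V → V} {F : ℕ → ℝ → V}
    {ρ : ℝ → V} {s : Set ℝ} (hb : LipschitzWith L b) (hϖ : 0 ≤ ϖ) (hlam : 0 ≤ lam)
    (hG : ∀ n y, ‖G n y‖ ≤ √‖y‖) (hs : IsCompact s) (hρ : ContinuousOn ρ s)
    (hF : TendstoUniformlyOn F ρ atTop s) :
    ∃ C, ∀ᶠ n in atTop, ∀ t ∈ s, ‖odeField b x ϖ lam (G n) t (F n t)‖ ≤ C := by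
  obtain ⟨M, hM⟩ := hs.exists_bound_of_continuousOn hρ
  refine ⟨L * (M + 1) + ϖ * √(M + 1) + lam * (M + 1), ?_⟩
  filter_upwards [Metric.tendstoUniformlyOn_iff.1 hF 1 one_pos] with n hn t ht
  have hFn : ‖F n t‖ ≤ M + 1 := by
    have := norm_le_norm_add_norm_sub' (F n t) (ρ t)
    rw [← dist_eq_norm, dist_comm] at this
    linarith [hM t ht, hn t ht]
  calc ‖odeField b x ϖ lam (G n) t (F n t)‖
      ≤ L * ‖F n t‖ + ϖ * ‖G n (F n t)‖ + lam * ‖F n t‖ := norm_odeField_le hb hϖ hlam t _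
    _ ≤ L * (M + 1) + ϖ * √(M + 1) + lam * (M + 1) := by
        gcongr
        exact (hG n _).trans (Real.sqrt_le_sqrt hFn)

theorem inner_odeField_sub_le [InnerProductSpace ℝ V] {g G₁ G₂ : V → V} {e₁ e₂ : ℝ}
    (hb : LipschitzWith L b) (hϖ : 0 ≤ ϖ) (hlam : 0 ≤ lam)
    (hg : ∀ y₁ y₂, 0 ≤ inner ℝ (g y₁ - g y₂) (y₁ - y₂))
    (hG₁ : ∀ y, ‖G₁ y - g y‖ ≤ e₁) (hG₂ : ∀ y, ‖G₂ y - g y‖ ≤ e₂) (t : ℝ) (y₁ y₂ : V) :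
    inner ℝ (odeField b x ϖ lam G₁ t y₁ - odeField b x ϖ lam G₂ t y₂) (y₁ - y₂) ≤
      L * ‖y₁ - y₂‖ ^ 2 + ϖ * (e₁ + e₂) * ‖y₁ - y₂‖ := by
  set w := y₁ - y₂
  set e := (G₁ y₁ - g y₁) - (G₂ y₂ - g y₂)
  have hsplit : odeField b x ϖ lam G₁ t y₁ - odeField b x ϖ lam G₂ t y₂ =
      (b (x t + y₁) - b (x t + y₂)) - ϖ • (g y₁ - g y₂) - ϖ • e - lam • w := by
    simp only [odeField, e, w, smul_sub]; abel
  have hb_term : inner ℝ (b (x t + y₁) - b (x t + y₂)) w ≤ L * ‖w‖ ^ 2 := by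
    have hbw : ‖b (x t + y₁) - b (x t + y₂)‖ ≤ L * ‖w‖ := by
      simpa [dist_eq_norm] using hb.dist_le_mul (x t + y₁) (x t + y₂)
    calc inner ℝ (b (x t + y₁) - b (x t + y₂)) w ≤ ‖b (x t + y₁) - b (x t + y₂)‖ * ‖w‖ :=
          real_inner_le_norm _ _
      _ ≤ L * ‖w‖ * ‖w‖ := by gcongr
      _ = L * ‖w‖ ^ 2 := by ring
  have he : ‖e‖ ≤ e₁ + e₂ := (norm_sub_le _ _).trans (add_le_add (hG₁ y₁) (hG₂ y₂))
  have he_term : -((e₁ + e₂) * ‖w‖) ≤ inner ℝ e w := by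
    have := neg_le_of_abs_le (abs_real_inner_le_norm e w)
    nlinarith [norm_nonneg w]
  have hw_term : 0 ≤ inner ℝ w w := real_inner_self_nonneg
  rw [hsplit, inner_sub_left, inner_sub_left, inner_sub_left, real_inner_smul_left,
    real_inner_smul_left, real_inner_smul_left]
  nlinarith [mul_nonneg hϖ (hg y₁ y₂), mul_nonneg hlam hw_term]

end OdeField

section Solutions

variable {V : Type*} [NormedAddCommGroup V] [InnerProductSpace ℝ V] {b : V → V} {x : ℝ → V}
  {ϖ lam a : ℝ} {L : ℝ≥0}

theorem dist_le_of_odeField_solutions {g G₁ G₂ : V → V} {e₁ e₂ : ℝ} {ρ₁ ρ₂ : ℝ → V}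
    (hb : LipschitzWith L b) (hϖ : 0 ≤ ϖ) (hlam : 0 ≤ lam)
    (hg : ∀ y₁ y₂, 0 ≤ inner ℝ (g y₁ - g y₂) (y₁ - y₂))
    (hG₁ : ∀ y, ‖G₁ y - g y‖ ≤ e₁) (hG₂ : ∀ y, ‖G₂ y - g y‖ ≤ e₂)
    (hρ₁ : ∀ t ∈ Ici a, HasDerivWithinAt ρ₁ (odeField b x ϖ lam G₁ t (ρ₁ t)) (Ici a) t)
    (hρ₂ : ∀ t ∈ Ici a, HasDerivWithinAt ρ₂ (odeField b x ϖ lam G₂ t (ρ₂ t)) (Ici a) t)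
    (h₀ : ρ₁ a = ρ₂ a) :
    ∀ t ∈ Ici a, dist (ρ₁ t) (ρ₂ t) ≤ ϖ * (e₁ + e₂) * Real.exp ((L + 1) * (t - a)) := by
  intro t ht
  have he : 0 ≤ e₁ + e₂ :=
    add_nonneg ((norm_nonneg _).trans (hG₁ 0)) ((norm_nonneg _).trans (hG₂ 0))
  exact dist_le_of_trajectories_of_inner_le L.coe_nonneg (mul_nonneg hϖ he)
    (fun s _ => inner_odeField_sub_le hb hϖ hlam hg hG₁ hG₂ s)
    (fun s hs => (hρ₁ s hs.1).continuousWithinAt.mono Icc_subset_Ici_self)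
    (fun s hs => (hρ₁ s hs.1).mono (Ici_subset_Ici.2 hs.1))
    (fun s hs => (hρ₂ s hs.1).continuousWithinAt.mono Icc_subset_Ici_self)
    (fun s hs => (hρ₂ s hs.1).mono (Ici_subset_Ici.2 hs.1)) h₀ t ⟨ht, le_rfl⟩

theorem eqOn_Ici_of_odeField_solutions {g : V → V} {ρ₁ ρ₂ : ℝ → V}
    (hb : LipschitzWith L b) (hϖ : 0 ≤ ϖ) (hlam : 0 ≤ lam)
    (hg : ∀ y₁ y₂, 0 ≤ inner ℝ (g y₁ - g y₂) (y₁ - y₂))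
    (hρ₁ : ∀ t ∈ Ici a, HasDerivWithinAt ρ₁ (odeField b x ϖ lam g t (ρ₁ t)) (Ici a) t)
    (hρ₂ : ∀ t ∈ Ici a, HasDerivWithinAt ρ₂ (odeField b x ϖ lam g t (ρ₂ t)) (Ici a) t)
    (h₀ : ρ₁ a = ρ₂ a) : EqOn ρ₁ ρ₂ (Ici a) := by
  intro t ht
  have hg₀ : ∀ y, ‖g y - g y‖ ≤ 0 := fun y => by rw [sub_self, norm_zero]
  have h := dist_le_of_odeField_solutions hb hϖ hlam hg hg₀ hg₀ hρ₁ hρ₂ h₀ t ht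
  rwa [add_zero, mul_zero, zero_mul, dist_le_zero] at h

end Solutions

section Existence

variable {d : ℕ} {b : EuclideanSpace ℝ (Fin d) → EuclideanSpace ℝ (Fin d)}
  {x : ℝ → EuclideanSpace ℝ (Fin d)} {ϖ lam a : ℝ} {L : ℝ≥0}

theorem exists_odeField_gReg_solutions_tendstoUniformlyOn (hb : LipschitzWith L b) (hϖ : 0 ≤ ϖ)
    (hlam : 0 ≤ lam) (hx : ContinuousOn x (Ici a)) (ρ₀ : EuclideanSpace ℝ (Fin d)) :
    ∃ (F : ℕ → ℝ → EuclideanSpace ℝ (Fin d)) (ρ : ℝ → EuclideanSpace ℝ (Fin d)),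
      (∀ n, F n a = ρ₀) ∧
      (∀ n, ∀ t ∈ Ici a, HasDerivWithinAt (F n)
        (odeField b x ϖ lam (gReg (1 / ((n : ℝ) + 1))) t (F n t)) (Ici a) t) ∧
      ∀ T, TendstoUniformlyOn F ρ atTop (Icc a T) := by
  set δ : ℕ → ℝ := fun n => 1 / ((n : ℝ) + 1)
  have hδ₀ : ∀ n, 0 < δ n := fun n => by positivity
  have happrox : ∀ n, ∃ F : ℝ → EuclideanSpace ℝ (Fin d), F a = ρ₀ ∧ ∀ t ∈ Ici a,
      HasDerivWithinAt F (odeField b x ϖ lam (gReg (δ n)) t (F t)) (Ici a) t := fun n =>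
    exists_forall_hasDerivWithinAt_Ici_of_lipschitzWith
      (lipschitzWith_odeField hb (lipschitzWith_gReg (hδ₀ n)))
      (fun _ => continuousOn_odeField hb.continuous (lipschitzWith_gReg (hδ₀ n)).continuous hx
        continuousOn_const) ρ₀
  choose F hF₀ hF using happrox
  refine ⟨F, fun t => limUnder atTop fun n => F n t, hF₀, hF, fun T => ?_⟩
  have hδ : Tendsto δ atTop (𝓝 0) := tendsto_one_div_add_atTop_nhds_zero_nat
  set C := 2 * ϖ * Real.exp ((L + 1) * (T - a))
  refine tendstoUniformlyOn_limUnder_of_dist_le (β := fun n => C * δ n)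
    (by simpa using hδ.const_mul C) fun n m t ht => ?_
  calc dist (F n t) (F m t) ≤ ϖ * (2 * δ n + 2 * δ m) * Real.exp ((L + 1) * (t - a)) :=
        dist_le_of_odeField_solutions hb hϖ hlam inner_gMap_sub_gMap_nonneg
          (norm_gReg_sub_gMap_le (hδ₀ n).le) (norm_gReg_sub_gMap_le (hδ₀ m).le) (hF n) (hF m)
          ((hF₀ n).trans (hF₀ m).symm) t ht.1
    _ ≤ ϖ * (2 * δ n + 2 * δ m) * Real.exp ((L + 1) * (T - a)) := by
        have := hδ₀ n; have := hδ₀ m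
        gcongr
        exact ht.2
    _ = C * δ n + C * δ m := by ring

theorem exists_odeField_gMap_solution (hb : LipschitzWith L b) (hϖ : 0 ≤ ϖ) (hlam : 0 ≤ lam)
    (hx : ContinuousOn x (Ici a)) (ρ₀ : EuclideanSpace ℝ (Fin d)) :
    ∃ ρ : ℝ → EuclideanSpace ℝ (Fin d), ρ a = ρ₀ ∧
      ∀ t ∈ Ici a, HasDerivWithinAt ρ (odeField b x ϖ lam (gMap d) t (ρ t)) (Ici a) t := by
  obtain ⟨F, ρ, hF₀, hF, hunif⟩ :=
    exists_odeField_gReg_solutions_tendstoUniformlyOn hb hϖ hlam hx ρ₀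
  have hδ₀ : ∀ n : ℕ, 0 < 1 / ((n : ℝ) + 1) := fun n => by positivity
  have hF_cont : ∀ n, ContinuousOn (F n) (Ici a) := fun n t ht => (hF n t ht).continuousWithinAt
  have hlim : ∀ t ∈ Ici a, Tendsto (fun n => F n t) atTop (𝓝 (ρ t)) :=
    fun t ht => (hunif t).tendsto_at ⟨ht, le_rfl⟩
  have hρ_cont : ContinuousOn ρ (Ici a) := continuousOn_Ici_of_tendstoUniformlyOn_Icc hF_cont hunif
  have hconv : ∀ t ∈ Ici a,
      Tendsto (fun n : ℕ => odeField b x ϖ lam (gReg (1 / ((n : ℝ) + 1))) t (F n t)) atTop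
        (𝓝 (odeField b x ϖ lam (gMap d) t (ρ t))) := by
    intro t ht
    have hg := (tendstoUniformly_gReg (fun n => (hδ₀ n).le) tendsto_one_div_add_atTop_nhds_zero_nat
      ).tendsto_comp continuous_gMap.continuousAt (hlim t ht)
    exact ((((hb.continuous.tendsto _).comp (tendsto_const_nhds.add (hlim t ht))).sub
      tendsto_const_nhds).sub (hg.const_smul ϖ)).sub ((hlim t ht).const_smul lam)
  have hρ₀ : ρ a = ρ₀ :=
    tendsto_nhds_unique (hlim a self_mem_Ici) (by simp only [hF₀]; exact tendsto_const_nhds)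
  exact ⟨ρ, hρ₀, hasDerivWithinAt_Ici_of_tendsto hF
      (fun n => continuousOn_odeField hb.continuous (lipschitzWith_gReg (hδ₀ n)).continuous hx
        (hF_cont n))
      (fun T => exists_eventually_norm_odeField_le hb hϖ hlam (fun n => norm_gReg_le _)
        isCompact_Icc (hρ_cont.mono Icc_subset_Ici_self) (hunif T))
      hlim hconv (continuousOn_odeField hb.continuous continuous_gMap hx hρ_cont)⟩

end Existence

/-- Existence-and-uniqueness part of Lemma 6.2: for `b` Lipschitz, the ODE
`ρ' = b(x+ρ) - b(x) - ϖ g(ρ) - λ ρ` with initial condition `ρ₀` has exactly one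
solution on `[0,∞)`. -/
theorem stmt_7 (d : ℕ) (b : EuclideanSpace ℝ (Fin d) → EuclideanSpace ℝ (Fin d))
    (hb : ∃ L : NNReal, LipschitzWith L b) (lam : ℝ) (hlam : 0 ≤ lam)
    (x : ℝ → EuclideanSpace ℝ (Fin d)) (hx : ContinuousOn x (Ici 0))
    (ϖ : ℝ) (hϖ : 0 < ϖ) (ρ₀ : EuclideanSpace ℝ (Fin d)) :
    ∃ ρ : ℝ → EuclideanSpace ℝ (Fin d),
      (ρ 0 = ρ₀ ∧ ∀ t ∈ Ici (0:ℝ),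
        HasDerivWithinAt ρ
          (b (x t + ρ t) - b (x t) - ϖ • gMap d (ρ t) - lam • ρ t) (Ici 0) t) ∧
      ∀ σ : ℝ → EuclideanSpace ℝ (Fin d),
        (σ 0 = ρ₀ ∧ ∀ t ∈ Ici (0:ℝ),
          HasDerivWithinAt σ
            (b (x t + σ t) - b (x t) - ϖ • gMap d (σ t) - lam • σ t) (Ici 0) t) →
        ∀ t ∈ Ici (0:ℝ), σ t = ρ t := by
  obtain ⟨L, hb⟩ := hb
  obtain ⟨ρ, hρ₀, hρ⟩ := exists_odeField_gMap_solution hb hϖ.le hlam hx ρ₀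
  exact ⟨ρ, ⟨hρ₀, hρ⟩, fun σ ⟨hσ₀, hσ⟩ => eqOn_Ici_of_odeField_solutions hb hϖ.le hlam
    inner_gMap_sub_gMap_nonneg hσ hρ (hσ₀.trans hρ₀.symm)⟩
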